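/- Let m ≥ 1 and j ∈ {1, 2, 3, 4}. There is a constant C_j ≥ 0, independent of t, such that for all t ≥ 0, all unit vectors V₁, …, V_j ∈ ℍ^m, and all (X,Z) ∈ ℍ^m × Im(ℍ): |(E_{V₁} E_{V₂} ⋯ E_{V_j} B_t)(X,Z)| ≤ C_j · B_t(X,Z)^{1 − j/4}, where B_t(X,Z) = (e^{−2t} + ‖X‖²/4)² + |Z|². Explicitly: |E_V B_t| ≤ C₁ B_t^{3/4}, |E_{V₁}E_{V₂} B_t| ≤ C₂ B_t^{1/2}, |E_{V₁}E_{V₂}E_{V₃} B_t| ≤ C₃ B_t^{1/4}, and |E_{V₁}E_{V₂}E_{V₃}E_{V₄} B_t| ≤ C₄. -/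

import Mathlib

/-!
Each `E_U` is a derivation. For fixed `V` it maps the building blocks `Re(X*V) = ⟪X, V⟫` and
`Im(X*V)/2` to the constants `⟪U, V⟫` and `Im(U*V)/2`, and it maps `Z` to `Im(X*U)/2`. Hence
`E_{V₁} ⋯ E_{V_j} B_t` is an explicit polynomial in `X`, `Z` and `a = e^{-2t}`, each term of
which is homogeneous of degree `4 - j` once `X` has weight `1` and `Z`, `a` have weight `2`.
With the gauge `ρ = B_t^{1/4}` one has `‖X‖ ≤ 2ρ`, `a + ‖X‖²/4 ≤ ρ²` and `|Z| ≤ ρ²`, so for unit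
`Vᵢ` every term, and hence the whole derivative, is `O(ρ^{4-j}) = O(B_t^{1-j/4})`, uniformly
in `t`.
-/

open Quaternion

noncomputable section

/-- The imaginary part `Im(q) = (q - q*)/2` of a quaternion. -/
def qIm (q : Quaternion ℝ) : Quaternion ℝ := (q - star q) / 2

/-- The left-invariant vector field `E_V` of the 2-step nilpotent group
`N̄ = ℍ^m × Im(ℍ)`, acting on (`F`-valued) functions on `ℍ^m × ℍ` by
`(E_V f)(X,Z) = Df(X,Z)[(V, Im(X*V)/2)]` (Fréchet derivative). -/
def EV {F : Type*} [NormedAddCommGroup F] [NormedSpace ℝ F] (m : ℕ)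
    (V : Fin m → Quaternion ℝ)
    (f : (Fin m → Quaternion ℝ) × Quaternion ℝ → F) :
    (Fin m → Quaternion ℝ) × Quaternion ℝ → F :=
  fun p => fderiv ℝ f p (V, qIm (∑ j, star (p.1 j) * V j) / 2)

/-- Iterated left-invariant derivative `E_{V₁} E_{V₂} ⋯ E_{V_j} f`. -/
def EIter {F : Type*} [NormedAddCommGroup F] [NormedSpace ℝ F] (m : ℕ) :
    List (Fin m → Quaternion ℝ) →
      ((Fin m → Quaternion ℝ) × Quaternion ℝ → F) →
      ((Fin m → Quaternion ℝ) × Quaternion ℝ → F)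
  | [], f => f
  | V :: Vs, f => EV m V (EIter m Vs f)

/-- `B_t(X,Z) = (e^{-2t} + ‖X‖²/4)² + |Z|²` as a function on `ℍ^m × ℍ`,
where `‖X‖² = ∑ⱼ |Xⱼ|²`. -/
def BtF (m : ℕ) (t : ℝ) : (Fin m → Quaternion ℝ) × Quaternion ℝ → ℝ :=
  fun p => (Real.exp (-2 * t) + (∑ j, Quaternion.normSq (p.1 j)) / 4) ^ 2
    + Quaternion.normSq p.2

open scoped RealInnerProductSpace
open WithLp

variable {m : ℕ}

def reDot (X V : Fin m → ℍ) : ℝ := ⟪toLp 2 X, toLp 2 V⟫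

def halfImDot (X V : Fin m → ℍ) : ℍ := qIm (∑ j, star (X j) * V j) / 2

def halfImDotLeft (V : Fin m → ℍ) : (Fin m → ℍ) →ₗ[ℝ] ℍ where
  toFun X := halfImDot X V
  map_add' X Y := by
    simp only [halfImDot, qIm, Pi.add_apply, star_add, add_mul, Finset.sum_add_distrib, ← add_div]
    congr 2
    abel
  map_smul' r X := by
    simp only [halfImDot, qIm, Pi.smul_apply, Quaternion.star_smul, smul_mul_assoc,
      ← Finset.smul_sum, ← smul_sub, smul_div_assoc, RingHom.id_apply]

lemma reDot_self (X : Fin m → ℍ) : reDot X X = ‖toLp 2 X‖ ^ 2 :=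
  real_inner_self_eq_norm_sq _

attribute [fun_prop] Differentiable.inner

@[fun_prop]
lemma Differentiable.toLp {E : Type*} [NormedAddCommGroup E] [NormedSpace ℝ E]
    {f : E → Fin m → ℍ} (hf : Differentiable ℝ f) : Differentiable ℝ (fun x => toLp 2 (f x)) :=
  (PiLp.continuousLinearEquiv 2 ℝ (fun _ : Fin m => ℍ)).symm.differentiable.comp hf

@[fun_prop]
lemma Differentiable.reDot {E : Type*} [NormedAddCommGroup E] [NormedSpace ℝ E]
    {f g : E → Fin m → ℍ} (hf : Differentiable ℝ f) (hg : Differentiable ℝ g) :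
    Differentiable ℝ (fun x => reDot (f x) (g x)) :=
  hf.toLp.inner ℝ hg.toLp

@[fun_prop]
lemma Differentiable.halfImDot_left {E : Type*} [NormedAddCommGroup E] [NormedSpace ℝ E]
    {f : E → Fin m → ℍ} (hf : Differentiable ℝ f) (V : Fin m → ℍ) :
    Differentiable ℝ (fun x => halfImDot (f x) V) :=
  (LinearMap.toContinuousLinearMap (halfImDotLeft V)).differentiable.comp hf

section LeftInvariantDerivative

variable {F : Type*} [NormedAddCommGroup F] [NormedSpace ℝ F] (U : Fin m → ℍ)
  {p : (Fin m → ℍ) × ℍ}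

lemma EV_apply (f : (Fin m → ℍ) × ℍ → F) :
    EV m U f p = fderiv ℝ f p (U, halfImDot p.1 U) :=
  rfl

lemma EV_comp_fst_linear (L : (Fin m → ℍ) →ₗ[ℝ] F) : EV m U (fun q => L q.1) p = L U :=
  congrArg (· (U, halfImDot p.1 U))
    ((LinearMap.toContinuousLinearMap L).hasFDerivAt.comp p hasFDerivAt_fst).fderiv

lemma EV_snd : EV m U Prod.snd p = halfImDot p.1 U := by
  rw [EV_apply, fderiv_snd]
  rfl

lemma EV_const (c : F) : EV m U (fun _ => c) p = 0 := by
  simp [EV_apply]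

lemma EV_add {f g : (Fin m → ℍ) × ℍ → F} (hf : DifferentiableAt ℝ f p)
    (hg : DifferentiableAt ℝ g p) : EV m U (fun q => f q + g q) p = EV m U f p + EV m U g p := by
  simp [EV_apply, fderiv_fun_add hf hg]

lemma EV_mul {f g : (Fin m → ℍ) × ℍ → ℝ} (hf : DifferentiableAt ℝ f p)
    (hg : DifferentiableAt ℝ g p) :
    EV m U (fun q => f q * g q) p = EV m U f p * g p + f p * EV m U g p := by
  simp only [EV_apply, fderiv_fun_mul hf hg, add_apply, smul_apply,
    smul_eq_mul]
  ring

lemma EV_div_const {f : (Fin m → ℍ) × ℍ → ℝ} (hf : DifferentiableAt ℝ f p) (c : ℝ) :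
    EV m U (fun q => f q / c) p = EV m U f p / c := by
  simp only [EV_apply, div_eq_mul_inv, fderiv_mul_const hf]
  simp [mul_comm]

lemma EV_inner {G : Type*} [NormedAddCommGroup G] [InnerProductSpace ℝ G]
    {f g : (Fin m → ℍ) × ℍ → G} (hf : DifferentiableAt ℝ f p) (hg : DifferentiableAt ℝ g p) :
    EV m U (fun q => ⟪f q, g q⟫) p = ⟪EV m U f p, g p⟫ + ⟪f p, EV m U g p⟫ := by
  rw [EV_apply, fderiv_inner_apply ℝ hf hg, add_comm]
  rfl

lemma EV_toLp_fst : EV m U (fun q => toLp 2 q.1) p = toLp 2 U :=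
  EV_comp_fst_linear U (WithLp.linearEquiv 2 ℝ (Fin m → ℍ)).symm.toLinearMap

lemma EV_reDot_fst (V : Fin m → ℍ) : EV m U (fun q => reDot q.1 V) p = reDot U V := by
  simp (disch := fun_prop) only [reDot, EV_inner, EV_toLp_fst, EV_const, inner_zero_right,
    add_zero]

lemma EV_reDot_fst_fst : EV m U (fun q => reDot q.1 q.1) p = 2 * reDot p.1 U := by
  simp (disch := fun_prop) only [reDot, EV_inner, EV_toLp_fst]
  rw [real_inner_comm]
  ring

lemma EV_halfImDot_fst (V : Fin m → ℍ) :
    EV m U (fun q => halfImDot q.1 V) p = halfImDot U V :=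
  EV_comp_fst_linear U (halfImDotLeft V)

end LeftInvariantDerivative

def firstDeriv (a : ℝ) (V : Fin m → ℍ) : (Fin m → ℍ) × ℍ → ℝ := fun q =>
  (a + reDot q.1 q.1 / 4) * reDot q.1 V + 2 * ⟪q.2, halfImDot q.1 V⟫

def secondDeriv (a : ℝ) (V₁ V₂ : Fin m → ℍ) : (Fin m → ℍ) × ℍ → ℝ := fun q =>
  reDot q.1 V₁ * reDot q.1 V₂ / 2 + (a + reDot q.1 q.1 / 4) * reDot V₁ V₂
    + 2 * ⟪halfImDot q.1 V₁, halfImDot q.1 V₂⟫ + 2 * ⟪q.2, halfImDot V₁ V₂⟫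

def thirdDeriv (V₁ V₂ V₃ : Fin m → ℍ) : (Fin m → ℍ) × ℍ → ℝ := fun q =>
  reDot V₁ V₂ * reDot q.1 V₃ / 2 + reDot q.1 V₂ * reDot V₁ V₃ / 2
    + reDot q.1 V₁ * reDot V₂ V₃ / 2 + 2 * ⟪halfImDot V₁ V₂, halfImDot q.1 V₃⟫
    + 2 * ⟪halfImDot q.1 V₂, halfImDot V₁ V₃⟫ + 2 * ⟪halfImDot q.1 V₁, halfImDot V₂ V₃⟫

def fourthDeriv (V₁ V₂ V₃ V₄ : Fin m → ℍ) : ℝ :=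
  reDot V₂ V₃ * reDot V₁ V₄ / 2 + reDot V₁ V₃ * reDot V₂ V₄ / 2
    + reDot V₁ V₂ * reDot V₃ V₄ / 2 + 2 * ⟪halfImDot V₂ V₃, halfImDot V₁ V₄⟫
    + 2 * ⟪halfImDot V₁ V₃, halfImDot V₂ V₄⟫ + 2 * ⟪halfImDot V₁ V₂, halfImDot V₃ V₄⟫

lemma BtF_eq (t : ℝ) :
    BtF m t = fun q => (Real.exp (-2 * t) + reDot q.1 q.1 / 4) ^ 2 + ⟪q.2, q.2⟫ := by
  funext q
  simp only [BtF, reDot, PiLp.inner_apply, Quaternion.inner_self]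

lemma EV_BtF (t : ℝ) (U : Fin m → ℍ) : EV m U (BtF m t) = firstDeriv (Real.exp (-2 * t)) U := by
  funext p
  simp (disch := fun_prop) only [BtF_eq, sq, EV_add, EV_mul, EV_div_const, EV_const, EV_inner,
    EV_reDot_fst_fst, EV_snd, firstDeriv]
  rw [real_inner_comm (halfImDot _ _)]
  ring

lemma EV_firstDeriv (a : ℝ) (U V : Fin m → ℍ) : EV m U (firstDeriv a V) = secondDeriv a U V := by
  funext p
  unfold firstDeriv
  simp (disch := fun_prop) only [EV_add, EV_mul, EV_div_const, EV_const, EV_inner,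
    EV_reDot_fst_fst, EV_reDot_fst, EV_halfImDot_fst, EV_snd, secondDeriv]
  ring

lemma EV_secondDeriv (a : ℝ) (U V₁ V₂ : Fin m → ℍ) :
    EV m U (secondDeriv a V₁ V₂) = thirdDeriv U V₁ V₂ := by
  funext p
  unfold secondDeriv
  simp (disch := fun_prop) only [EV_add, EV_mul, EV_div_const, EV_const, EV_inner,
    inner_zero_right, EV_reDot_fst_fst, EV_reDot_fst, EV_halfImDot_fst, EV_snd, thirdDeriv]
  ring

lemma EV_thirdDeriv (U V₁ V₂ V₃ : Fin m → ℍ) :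
    EV m U (thirdDeriv V₁ V₂ V₃) = fun _ => fourthDeriv U V₁ V₂ V₃ := by
  funext p
  unfold thirdDeriv
  simp (disch := fun_prop) only [EV_add, EV_mul, EV_div_const, EV_const, EV_inner,
    inner_zero_right, inner_zero_left, EV_reDot_fst, EV_halfImDot_fst, fourthDeriv]
  ring

lemma norm_div_two (q : ℍ) : ‖q / 2‖ = ‖q‖ / 2 := by
  rw [norm_div, show (2 : ℍ) = ((2 : ℝ) : ℍ) from rfl, norm_coe, Real.norm_two]

lemma norm_qIm_le (q : ℍ) : ‖qIm q‖ ≤ ‖q‖ := by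
  rw [qIm, norm_div_two, div_le_iff₀ two_pos]
  linarith [norm_sub_le q (star q), _root_.norm_star q]

lemma norm_sum_star_mul_le (X V : Fin m → ℍ) :
    ‖∑ j, star (X j) * V j‖ ≤ ‖toLp 2 X‖ * ‖toLp 2 V‖ := calc
  ‖∑ j, star (X j) * V j‖ ≤ ∑ j, ‖X j‖ * ‖V j‖ :=
    (norm_sum_le _ _).trans_eq (by simp only [norm_mul, _root_.norm_star])
  _ ≤ √(∑ j, ‖X j‖ ^ 2) * √(∑ j, ‖V j‖ ^ 2) := Real.sum_mul_le_sqrt_mul_sqrt _ _ _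
  _ = ‖toLp 2 X‖ * ‖toLp 2 V‖ := by simp only [PiLp.norm_eq_of_L2]

lemma norm_halfImDot_le (X V : Fin m → ℍ) :
    ‖halfImDot X V‖ ≤ ‖toLp 2 X‖ * ‖toLp 2 V‖ / 2 := by
  rw [halfImDot, norm_div_two]
  gcongr
  exact (norm_qIm_le _).trans (norm_sum_star_mul_le X V)

lemma abs_reDot_le (X V : Fin m → ℍ) : |reDot X V| ≤ ‖toLp 2 X‖ * ‖toLp 2 V‖ :=
  abs_real_inner_le_norm _ _

lemma abs_two_mul_inner_halfImDot_le (A : ℍ) (X V : Fin m → ℍ) :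
    |2 * ⟪A, halfImDot X V⟫| ≤ ‖A‖ * (‖toLp 2 X‖ * ‖toLp 2 V‖) := by
  rw [abs_mul, abs_two]
  have := (abs_real_inner_le_norm A (halfImDot X V)).trans
    (mul_le_mul_of_nonneg_left (norm_halfImDot_le X V) (norm_nonneg A))
  linarith

lemma abs_reDot_mul_reDot_div_two_le (X V Y W : Fin m → ℍ) :
    |reDot X V * reDot Y W / 2| ≤ ‖toLp 2 X‖ * ‖toLp 2 V‖ * (‖toLp 2 Y‖ * ‖toLp 2 W‖) / 2 := by
  rw [abs_div, abs_mul, abs_two]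
  gcongr
  · exact abs_reDot_le X V
  · exact abs_reDot_le Y W

lemma abs_two_mul_inner_halfImDot_halfImDot_le (X V Y W : Fin m → ℍ) :
    |2 * ⟪halfImDot X V, halfImDot Y W⟫|
      ≤ ‖toLp 2 X‖ * ‖toLp 2 V‖ * (‖toLp 2 Y‖ * ‖toLp 2 W‖) / 2 := by
  refine (abs_two_mul_inner_halfImDot_le _ Y W).trans ?_
  have := mul_le_mul_of_nonneg_right (norm_halfImDot_le X V)
    (by positivity : 0 ≤ ‖toLp 2 Y‖ * ‖toLp 2 W‖)
  linarith

lemma abs_add_le_of_abs_le {a b c d : ℝ} (h₁ : |a| ≤ c) (h₂ : |b| ≤ d) : |a + b| ≤ c + d :=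
  (abs_add_le a b).trans (add_le_add h₁ h₂)

section UnitVectors

variable {a ρ : ℝ} {X V₁ V₂ V₃ V₄ : Fin m → ℍ} {Z : ℍ}

lemma abs_firstDeriv_le (h₁ : ‖toLp 2 V₁‖ = 1) (ha : 0 ≤ a)
    (hu : a + ‖toLp 2 X‖ ^ 2 / 4 ≤ ρ ^ 2) (hZ : ‖Z‖ ≤ ρ ^ 2) (hX : ‖toLp 2 X‖ ≤ 2 * ρ) :
    |firstDeriv a V₁ (X, Z)| ≤ 4 * ρ ^ 3 := by
  have hρ : 0 ≤ ρ := by linarith [norm_nonneg (toLp 2 X)]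
  have hR := abs_reDot_le X V₁
  have hW := abs_two_mul_inner_halfImDot_le Z X V₁
  rw [h₁, mul_one] at hR hW
  have t₁ : |(a + reDot X X / 4) * reDot X V₁| ≤ ρ ^ 2 * (2 * ρ) := by
    rw [reDot_self, abs_mul, abs_of_nonneg (by positivity)]
    exact mul_le_mul hu (hR.trans hX) (abs_nonneg _) (by positivity)
  have t₂ : |2 * ⟪Z, halfImDot X V₁⟫| ≤ ρ ^ 2 * (2 * ρ) :=
    hW.trans (mul_le_mul hZ hX (norm_nonneg _) (by positivity))
  calc |firstDeriv a V₁ (X, Z)| ≤ ρ ^ 2 * (2 * ρ) + ρ ^ 2 * (2 * ρ) :=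
        abs_add_le_of_abs_le t₁ t₂
    _ = 4 * ρ ^ 3 := by ring

lemma abs_secondDeriv_le (h₁ : ‖toLp 2 V₁‖ = 1) (h₂ : ‖toLp 2 V₂‖ = 1) (ha : 0 ≤ a)
    (hu : a + ‖toLp 2 X‖ ^ 2 / 4 ≤ ρ ^ 2) (hZ : ‖Z‖ ≤ ρ ^ 2) :
    |secondDeriv a V₁ V₂ (X, Z)| ≤ 6 * ρ ^ 2 := by
  have t₁ := abs_reDot_mul_reDot_div_two_le X V₁ X V₂
  have t₂ : |(a + reDot X X / 4) * reDot V₁ V₂| ≤ a + ‖toLp 2 X‖ ^ 2 / 4 := by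
    rw [reDot_self, abs_mul, abs_of_nonneg (by positivity)]
    simpa [h₁, h₂] using mul_le_mul_of_nonneg_left (abs_reDot_le V₁ V₂) (by positivity)
  have t₃ := abs_two_mul_inner_halfImDot_halfImDot_le X V₁ X V₂
  have t₄ := abs_two_mul_inner_halfImDot_le Z V₁ V₂
  rw [h₁, h₂, mul_one] at t₁ t₃
  rw [h₁, h₂, mul_one, mul_one] at t₄
  have := abs_add_le_of_abs_le (abs_add_le_of_abs_le (abs_add_le_of_abs_le t₁ t₂) t₃) t₄
  unfold secondDeriv
  linarith

lemma abs_thirdDeriv_le (h₁ : ‖toLp 2 V₁‖ = 1) (h₂ : ‖toLp 2 V₂‖ = 1) (h₃ : ‖toLp 2 V₃‖ = 1)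
    (hX : ‖toLp 2 X‖ ≤ 2 * ρ) : |thirdDeriv V₁ V₂ V₃ (X, Z)| ≤ 6 * ρ := by
  have t₁ := abs_reDot_mul_reDot_div_two_le V₁ V₂ X V₃
  have t₂ := abs_reDot_mul_reDot_div_two_le X V₂ V₁ V₃
  have t₃ := abs_reDot_mul_reDot_div_two_le X V₁ V₂ V₃
  have t₄ := abs_two_mul_inner_halfImDot_halfImDot_le V₁ V₂ X V₃
  have t₅ := abs_two_mul_inner_halfImDot_halfImDot_le X V₂ V₁ V₃
  have t₆ := abs_two_mul_inner_halfImDot_halfImDot_le X V₁ V₂ V₃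
  simp only [h₁, h₂, h₃, one_mul, mul_one] at t₁ t₂ t₃ t₄ t₅ t₆
  have := abs_add_le_of_abs_le (abs_add_le_of_abs_le (abs_add_le_of_abs_le
    (abs_add_le_of_abs_le (abs_add_le_of_abs_le t₁ t₂) t₃) t₄) t₅) t₆
  unfold thirdDeriv
  linarith

lemma abs_fourthDeriv_le (h₁ : ‖toLp 2 V₁‖ = 1) (h₂ : ‖toLp 2 V₂‖ = 1) (h₃ : ‖toLp 2 V₃‖ = 1)
    (h₄ : ‖toLp 2 V₄‖ = 1) : |fourthDeriv V₁ V₂ V₃ V₄| ≤ 3 := by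
  have t₁ := abs_reDot_mul_reDot_div_two_le V₂ V₃ V₁ V₄
  have t₂ := abs_reDot_mul_reDot_div_two_le V₁ V₃ V₂ V₄
  have t₃ := abs_reDot_mul_reDot_div_two_le V₁ V₂ V₃ V₄
  have t₄ := abs_two_mul_inner_halfImDot_halfImDot_le V₂ V₃ V₁ V₄
  have t₅ := abs_two_mul_inner_halfImDot_halfImDot_le V₁ V₃ V₂ V₄
  have t₆ := abs_two_mul_inner_halfImDot_halfImDot_le V₁ V₂ V₃ V₄
  simp only [h₁, h₂, h₃, h₄, one_mul] at t₁ t₂ t₃ t₄ t₅ t₆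
  have := abs_add_le_of_abs_le (abs_add_le_of_abs_le (abs_add_le_of_abs_le
    (abs_add_le_of_abs_le (abs_add_le_of_abs_le t₁ t₂) t₃) t₄) t₅) t₆
  unfold fourthDeriv
  linarith

end UnitVectors

lemma le_sq_of_sq_add_sq_eq_pow_four {a r z ρ : ℝ} (ha : 0 ≤ a) (hz : 0 ≤ z) (hρ : 0 ≤ ρ)
    (h : (a + r ^ 2 / 4) ^ 2 + z ^ 2 = ρ ^ 4) :
    a + r ^ 2 / 4 ≤ ρ ^ 2 ∧ z ≤ ρ ^ 2 ∧ r ≤ 2 * ρ := by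
  have hρ4 : ρ ^ 4 = (ρ ^ 2) ^ 2 := by ring
  have hu : a + r ^ 2 / 4 ≤ ρ ^ 2 :=
    (pow_le_pow_iff_left₀ (by positivity) (by positivity) two_ne_zero).mp
      (by linarith [sq_nonneg z])
  have hz' : z ≤ ρ ^ 2 :=
    (pow_le_pow_iff_left₀ hz (by positivity) two_ne_zero).mp
      (by linarith [sq_nonneg (a + r ^ 2 / 4)])
  refine ⟨hu, hz', abs_le_of_sq_le_sq' ?_ (by positivity) |>.2⟩
  nlinarith

def BtGauge (m : ℕ) (t : ℝ) (p : (Fin m → ℍ) × ℍ) : ℝ := BtF m t p ^ (1 / 4 : ℝ)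

lemma BtF_apply (t : ℝ) (X : Fin m → ℍ) (Z : ℍ) :
    BtF m t (X, Z) = (Real.exp (-2 * t) + ‖toLp 2 X‖ ^ 2 / 4) ^ 2 + ‖Z‖ ^ 2 := by
  simp only [BtF_eq, reDot_self, real_inner_self_eq_norm_sq]

lemma BtF_nonneg (t : ℝ) (p : (Fin m → ℍ) × ℍ) : 0 ≤ BtF m t p := by
  rw [BtF_apply]
  positivity

lemma rpow_one_sub_div_four {B : ℝ} (hB : 0 ≤ B) {j : ℕ} (hj : j ≤ 4) :
    B ^ (1 - j / 4 : ℝ) = (B ^ (1 / 4 : ℝ)) ^ (4 - j) := by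
  rw [← Real.rpow_natCast, ← Real.rpow_mul hB, Nat.cast_sub hj]
  congr 1
  push_cast
  ring

lemma BtGauge_pow_four (t : ℝ) (p : (Fin m → ℍ) × ℍ) : BtGauge m t p ^ 4 = BtF m t p := by
  rw [BtGauge, ← Real.rpow_natCast, ← Real.rpow_mul (BtF_nonneg t p)]
  norm_num

lemma BtGauge_bounds (t : ℝ) (X : Fin m → ℍ) (Z : ℍ) :
    Real.exp (-2 * t) + ‖toLp 2 X‖ ^ 2 / 4 ≤ BtGauge m t (X, Z) ^ 2 ∧
      ‖Z‖ ≤ BtGauge m t (X, Z) ^ 2 ∧ ‖toLp 2 X‖ ≤ 2 * BtGauge m t (X, Z) := by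
  refine le_sq_of_sq_add_sq_eq_pow_four (Real.exp_pos _).le (norm_nonneg Z)
    (Real.rpow_nonneg (BtF_nonneg t _) _) ?_
  rw [BtGauge_pow_four, BtF_apply]

lemma norm_toLp_eq_one {V : Fin m → ℍ} (hV : ∑ k, normSq (V k) = 1) : ‖toLp 2 V‖ = 1 := by
  rw [← pow_eq_one_iff_of_nonneg (norm_nonneg _) two_ne_zero, PiLp.norm_sq_eq_of_L2, ← hV]
  simp [normSq_eq_norm_mul_self, sq]

theorem stmt_10_general (m : ℕ) (j : ℕ) (hj : j ∈ ({1, 2, 3, 4} : Set ℕ)) :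
    ∃ C : ℝ, 0 ≤ C ∧ ∀ t : ℝ, 0 ≤ t → ∀ V : Fin j → Fin m → Quaternion ℝ,
      (∀ i, ∑ k, Quaternion.normSq (V i k) = 1) →
      ∀ X : Fin m → Quaternion ℝ, ∀ Z : Quaternion ℝ, Z.re = 0 →
        |EIter m (List.ofFn V) (BtF m t) (X, Z)|
          ≤ C * BtF m t (X, Z) ^ ((1 : ℝ) - (j : ℝ) / 4) := by
  simp only [Set.mem_insert_iff, Set.mem_singleton_iff] at hj
  suffices ∃ C : ℝ, 0 ≤ C ∧ ∀ (t : ℝ) (V : Fin j → Fin m → ℍ), (∀ i, ‖toLp 2 (V i)‖ = 1) →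
      ∀ X Z, |EIter m (List.ofFn V) (BtF m t) (X, Z)| ≤ C * BtGauge m t (X, Z) ^ (4 - j) by
    obtain ⟨C, hC, hbound⟩ := this
    refine ⟨C, hC, fun t _ V hV X Z _ => ?_⟩
    rw [rpow_one_sub_div_four (BtF_nonneg t _) (by omega)]
    exact hbound t V (fun i => norm_toLp_eq_one (hV i)) X Z
  rcases hj with rfl | rfl | rfl | rfl
  · refine ⟨4, by norm_num, fun t V hV X Z => ?_⟩
    obtain ⟨hu, hZ, hX⟩ := BtGauge_bounds t X Z
    simpa [EIter, EV_BtF] using abs_firstDeriv_le (hV 0) (Real.exp_pos _).le hu hZ hX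
  · refine ⟨6, by norm_num, fun t V hV X Z => ?_⟩
    obtain ⟨hu, hZ, -⟩ := BtGauge_bounds t X Z
    simpa [EIter, EV_BtF, EV_firstDeriv] using
      abs_secondDeriv_le (hV 0) (hV 1) (Real.exp_pos _).le hu hZ
  · refine ⟨6, by norm_num, fun t V hV X Z => ?_⟩
    obtain ⟨-, -, hX⟩ := BtGauge_bounds t X Z
    simpa [EIter, EV_BtF, EV_firstDeriv, EV_secondDeriv] using
      abs_thirdDeriv_le (hV 0) (hV 1) (hV 2) hX
  · refine ⟨3, by norm_num, fun t V hV X Z => ?_⟩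
    simpa [EIter, EV_BtF, EV_firstDeriv, EV_secondDeriv, EV_thirdDeriv] using
      abs_fourthDeriv_le (hV 0) (hV 1) (hV 2) (hV 3)

/-- for `j ∈ {1,2,3,4}` there is `C_j ≥ 0` with
`|E_{V₁} ⋯ E_{V_j} B_t| ≤ C_j · B_t^{1-j/4}` for all `t ≥ 0`, all unit vectors
`V₁, …, V_j ∈ ℍ^m` and all `(X,Z) ∈ ℍ^m × Im(ℍ)`. -/
theorem stmt_10 (m : ℕ) (hm : 1 ≤ m) (j : ℕ) (hj : j ∈ ({1, 2, 3, 4} : Set ℕ)) :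
    ∃ C : ℝ, 0 ≤ C ∧ ∀ t : ℝ, 0 ≤ t → ∀ V : Fin j → Fin m → Quaternion ℝ,
      (∀ i, ∑ k, Quaternion.normSq (V i k) = 1) →
      ∀ X : Fin m → Quaternion ℝ, ∀ Z : Quaternion ℝ, Z.re = 0 →
        |EIter m (List.ofFn V) (BtF m t) (X, Z)|
          ≤ C * BtF m t (X, Z) ^ ((1 : ℝ) - (j : ℝ) / 4) :=
  stmt_10_general m j hj
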